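/- arXiv:1305.5941 — 2 statements merged into one kernel-verified Lean document; each statement's English description precedes it below -/
import Mathlib

section
/- For every bipartite state ρ of dimension m×n, the infimum defining the entanglement of formation is unchanged if the ensembles are restricted to have at most m²n² members: E_F(ρ) equals the infimum of Σ_{i=1}^{m²n²} p_i S(tr_B(ψ_i ψ_i*)) over all families (p_i, ψ_i)_{i=1}^{m²n²} with ψ_i ∈ ℂ^m⊗ℂ^n unit vectors, p_i ≥ 0, and Σ_{i=1}^{m²n²} p_i ψ_i ψ_i* = ρ. -/
open scoped Kronecker ComplexOrder Matrix

noncomputable section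

/-- A quantum state (density matrix): positive semidefinite with trace 1. -/
def IsState {α : Type*} [Fintype α] (ρ : Matrix α α ℂ) : Prop :=
  ρ.PosSemidef ∧ ρ.trace = 1

/-- The rank-one matrix `ψ ψ*`. -/
def vecState {α : Type*} (ψ : α → ℂ) : Matrix α α ℂ :=
  fun i j => ψ i * star (ψ j)

/-- Kronecker product of two vectors. -/
def kronVec {α β : Type*} (a : α → ℂ) (b : β → ℂ) : α × β → ℂ :=
  fun p => a p.1 * b p.2

/-- Partial trace over the first tensor factor. -/
def ptrace1 {α β : Type*} [Fintype α] (M : Matrix (α × β) (α × β) ℂ) : Matrix β β ℂ :=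
  fun k k' => ∑ i, M (i, k) (i, k')

/-- Partial trace over the second tensor factor. -/
def ptrace2 {α β : Type*} [Fintype β] (M : Matrix (α × β) (α × β) ℂ) : Matrix α α ℂ :=
  fun i i' => ∑ k, M (i, k) (i', k)

/-- Partial trace over the third factor of a triple tensor product. -/
def ptrace3 {α β γ : Type*} [Fintype γ]
    (M : Matrix (α × β × γ) (α × β × γ) ℂ) : Matrix (α × β) (α × β) ℂ :=
  fun p q => ∑ t, M (p.1, (p.2, t)) (q.1, (q.2, t))

/-- Partial trace over the middle factor of a triple tensor product. -/
def ptraceMid {α β γ : Type*} [Fintype β]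
    (M : Matrix (α × β × γ) (α × β × γ) ℂ) : Matrix (α × γ) (α × γ) ℂ :=
  fun p q => ∑ k, M (p.1, (k, p.2)) (q.1, (k, q.2))

/-- Partial trace over the primed (A' and B') factors of a state on (A⊗A')⊗(B⊗B'). -/
def ptracePrimes {α α' β β' : Type*} [Fintype α'] [Fintype β']
    (M : Matrix ((α × α') × β × β') ((α × α') × β × β') ℂ) : Matrix (α × β) (α × β) ℂ :=
  fun p q => ∑ s, ∑ t, M ((p.1, s), (p.2, t)) ((q.1, s), (q.2, t))

/-- Partial trace over the unprimed (A and B) factors of a state on (A⊗A')⊗(B⊗B'). -/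
def ptraceUnprimed {α α' β β' : Type*} [Fintype α] [Fintype β]
    (M : Matrix ((α × α') × β × β') ((α × α') × β × β') ℂ) : Matrix (α' × β') (α' × β') ℂ :=
  fun p q => ∑ i, ∑ k, M ((i, p.1), (k, p.2)) ((i, q.1), (k, q.2))

/-- Von Neumann entropy: `S(ρ) = -∑ λᵢ log λᵢ` where λᵢ are the eigenvalues. -/
def vnEntropy {α : Type*} [Fintype α] [DecidableEq α] (ρ : Matrix α α ℂ) : ℝ :=
  if h : ρ.IsHermitian then ∑ i, Real.negMulLog (h.eigenvalues i) else 0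

/-- Entanglement of formation. -/
def EoF {α β : Type*} [Fintype α] [Fintype β] [DecidableEq α]
    (ρ : Matrix (α × β) (α × β) ℂ) : ℝ :=
  sInf {x : ℝ | ∃ (k : ℕ) (p : Fin k → ℝ) (ψ : Fin k → α × β → ℂ),
    (∀ i, 0 ≤ p i) ∧ (∀ i, star (ψ i) ⬝ᵥ ψ i = 1) ∧
    (∑ i, (p i : ℂ) • vecState (ψ i)) = ρ ∧
    x = ∑ i, p i * vnEntropy (ptrace2 (vecState (ψ i)))}

/-- Separability of a bipartite state. -/
def IsSepState {α β : Type*} [Fintype α] [Fintype β]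
    (ρ : Matrix (α × β) (α × β) ℂ) : Prop :=
  ∃ (k : ℕ) (p : Fin k → ℝ) (a : Fin k → α → ℂ) (b : Fin k → β → ℂ),
    (∀ i, 0 ≤ p i) ∧ (∑ i, p i) = 1 ∧
    (∀ i, star (a i) ⬝ᵥ a i = 1) ∧ (∀ i, star (b i) ⬝ᵥ b i = 1) ∧
    ρ = ∑ i, (p i : ℂ) • (vecState (a i) ⊗ₖ vecState (b i))

/-- Classical-classical bipartite states. -/
def IsCC {α β : Type*} [Fintype α] [Fintype β] [DecidableEq α] [DecidableEq β]
    (ρ : Matrix (α × β) (α × β) ℂ) : Prop :=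
  ∃ (a : α → α → ℂ) (b : β → β → ℂ) (p : α → β → ℝ),
    (∀ i j, star (a i) ⬝ᵥ a j = if i = j then 1 else 0) ∧
    (∀ i j, star (b i) ⬝ᵥ b j = if i = j then 1 else 0) ∧
    (∀ i j, 0 ≤ p i j) ∧ (∑ i, ∑ j, p i j) = 1 ∧
    ρ = ∑ i, ∑ j, (p i j : ℂ) • (vecState (a i) ⊗ₖ vecState (b j))

/-- Quantum-classical bipartite states (classical on the second factor). -/
def IsQC {α β : Type*} [Fintype α] [Fintype β] [DecidableEq β]
    (ρ : Matrix (α × β) (α × β) ℂ) : Prop :=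
  ∃ (b : β → β → ℂ) (σ : β → Matrix α α ℂ) (p : β → ℝ),
    (∀ i j, star (b i) ⬝ᵥ b j = if i = j then 1 else 0) ∧
    (∀ i, IsState (σ i)) ∧ (∀ i, 0 ≤ p i) ∧ (∑ i, p i) = 1 ∧
    ρ = ∑ i, (p i : ℂ) • (σ i ⊗ₖ vecState (b i))

/-- A POVM: finitely many positive semidefinite operators summing to the identity. -/
def IsPOVM {γ : Type*} [Fintype γ] [DecidableEq γ] {k : ℕ}
    (P : Fin k → Matrix γ γ ℂ) : Prop :=
  (∀ i, (P i).PosSemidef) ∧ (∑ i, P i) = 1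

/-- A von Neumann measurement: pairwise-orthogonal orthogonal projections summing to I. -/
def IsVNMeas {γ : Type*} [Fintype γ] [DecidableEq γ] {k : ℕ}
    (P : Fin k → Matrix γ γ ℂ) : Prop :=
  (∀ i, (P i).IsHermitian) ∧ (∀ i, P i * P i = P i) ∧
  (∀ i j, i ≠ j → P i * P j = 0) ∧ (∑ i, P i) = 1

/-- The term `pᵢ S(ρ_A^i)` for a measurement operator `P` on the second subsystem,
with the convention that the term vanishes when `pᵢ = 0`. -/
def measTerm {α β : Type*} [Fintype α] [Fintype β] [DecidableEq α] [DecidableEq β]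
    (ρ : Matrix (α × β) (α × β) ℂ) (P : Matrix β β ℂ) : ℝ :=
  if _h : (Matrix.trace (ρ * ((1 : Matrix α α ℂ) ⊗ₖ P))).re = 0 then 0
  else (Matrix.trace (ρ * ((1 : Matrix α α ℂ) ⊗ₖ P))).re *
    vnEntropy ((((Matrix.trace (ρ * ((1 : Matrix α α ℂ) ⊗ₖ P))).re : ℂ))⁻¹ •
      ptrace2 (ρ * ((1 : Matrix α α ℂ) ⊗ₖ P)))

/-- Quantum discord with POVM measurements on the second subsystem. -/
def discordP {α β : Type*} [Fintype α] [Fintype β] [DecidableEq α] [DecidableEq β]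
    (ρ : Matrix (α × β) (α × β) ℂ) : ℝ :=
  vnEntropy (ptrace1 ρ) - vnEntropy ρ +
    sInf {x : ℝ | ∃ (k : ℕ) (P : Fin k → Matrix β β ℂ),
      IsPOVM P ∧ x = ∑ i, measTerm ρ (P i)}

/-- Quantum discord with von Neumann measurements on the second subsystem. -/
def discordN {α β : Type*} [Fintype α] [Fintype β] [DecidableEq α] [DecidableEq β]
    (ρ : Matrix (α × β) (α × β) ℂ) : ℝ :=
  vnEntropy (ptrace1 ρ) - vnEntropy ρ +
    sInf {x : ℝ | ∃ (k : ℕ) (P : Fin k → Matrix β β ℂ),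
      IsVNMeas P ∧ x = ∑ i, measTerm ρ (P i)}

/-- The trace norm `‖X‖₁ = tr √(X* X)`. -/
def traceNorm {α : Type*} [Fintype α] [DecidableEq α] (X : Matrix α α ℂ) : ℝ :=
  ((Matrix.posSemidef_conjTranspose_mul_self X).1.eigenvectorUnitary.1 *
    Matrix.diagonal (((↑) : ℝ → ℂ) ∘ Real.sqrt ∘ (Matrix.posSemidef_conjTranspose_mul_self X).1.eigenvalues) *
    (star (Matrix.posSemidef_conjTranspose_mul_self X).1.eigenvectorUnitary : Matrix α α ℂ)).trace.re

/-- The Frobenius norm `‖X‖₂ = √(tr (X* X))`. -/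
def frobNorm {α β : Type*} [Fintype α] [Fintype β] (X : Matrix α β ℂ) : ℝ :=
  Real.sqrt (Matrix.trace (Xᴴ * X)).re

/-- Matrix logarithm taken on the support (eigenvalue 0 is sent to 0). -/
def matLog {α : Type*} [Fintype α] [DecidableEq α] (A : Matrix α α ℂ) : Matrix α α ℂ :=
  if h : A.IsHermitian then
    (Matrix.IsHermitian.eigenvectorUnitary h : Matrix α α ℂ) *
      Matrix.diagonal (fun i => if h.eigenvalues i = 0 then 0
        else (Real.log (h.eigenvalues i) : ℂ)) *
      (star (Matrix.IsHermitian.eigenvectorUnitary h) : Matrix α α ℂ)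
  else 0

end

/-!
Write `ρ = ∑ pᵢ ψᵢψᵢ*`. The matrices `ψᵢψᵢ*` are Hermitian of trace one and the Hermitian
`d × d` matrices form a real space of dimension `d²`, so as soon as there are more than `d²`
members there is a real relation `∑ cᵢ ψᵢψᵢ* = 0` with `∑ cᵢ = 0` and `c ≠ 0`. Replacing `c` by
`-c` if necessary, moving the weights along `p + t c` does not increase `∑ pᵢ S(tr_B ψᵢψᵢ*)`, and
the largest admissible `t` kills one member. Iterating this Carathéodory-type step shrinks any
ensemble to `d² = m²n²` members (padding with zero weights if it was smaller).
-/

open Finset Module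

lemma exists_nonneg_add_mul_eq_zero {ι : Type*} [Fintype ι] {p c : ι → ℝ}
    (hp : ∀ i, 0 ≤ p i) (hc : ∃ i, c i < 0) :
    ∃ t, 0 ≤ t ∧ (∀ i, 0 ≤ p i + t * c i) ∧ ∃ i, p i + t * c i = 0 := by
  obtain ⟨i₀, hi₀, hmin⟩ := (univ.filter fun i => c i < 0).exists_min_image
    (fun i => p i / -c i) (by simpa [Finset.Nonempty] using hc)
  have hci₀ : c i₀ < 0 := (mem_filter.mp hi₀).2
  refine ⟨p i₀ / -c i₀, div_nonneg (hp i₀) (by linarith), fun i => ?_, i₀, by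
    rw [div_neg, neg_mul, div_mul_cancel₀ _ hci₀.ne, add_neg_cancel]⟩
  rcases le_or_gt 0 (c i) with hci | hci
  · have := mul_nonneg (div_nonneg (hp i₀) (neg_nonneg.mpr hci₀.le)) hci
    linarith [hp i]
  · have hle := hmin i (mem_filter.mpr ⟨mem_univ i, hci⟩)
    have := (le_div_iff₀ (neg_pos.mpr hci)).mp hle
    linarith

lemma exists_pad_weights {M : Type*} [AddCommMonoid M] [Module ℝ M] {k N : ℕ} (hk : 0 < k)
    (hkN : k ≤ N) (w : Fin k → M) (S p : Fin k → ℝ) (hp : ∀ i, 0 ≤ p i) :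
    ∃ (σ : Fin N → Fin k) (q : Fin N → ℝ), (∀ j, 0 ≤ q j) ∧
      ∑ j, q j • w (σ j) = ∑ i, p i • w i ∧ ∑ j, q j * S (σ j) = ∑ i, p i * S i := by
  set σ : Fin N → Fin k := fun j => if h : (j : ℕ) < k then ⟨j, h⟩ else ⟨0, hk⟩
  set q : Fin N → ℝ := fun j => if h : (j : ℕ) < k then p ⟨j, h⟩ else 0
  have hq : ∀ i, q (Fin.castLE hkN i) = p i := fun i => by simp [q]
  have hσ : ∀ i, σ (Fin.castLE hkN i) = i := fun i => by simp [σ]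
  have hq0 : ∀ j ∉ Set.range (Fin.castLE hkN), q j = 0 := fun j hj => dif_neg fun h =>
    hj ⟨⟨j, h⟩, rfl⟩
  refine ⟨σ, q, fun j => ?_, ?_, ?_⟩
  · by_cases h : (j : ℕ) < k
    · simpa [q, h] using hp _
    · simp [q, h]
  · refine (Fintype.sum_of_injective _ (Fin.castLE_injective hkN) _ _
      (fun j hj => by simp [hq0 j hj]) fun i => ?_).symm
    rw [hq, hσ]
  · refine (Fintype.sum_of_injective _ (Fin.castLE_injective hkN) _ _
      (fun j hj => by simp [hq0 j hj]) fun i => ?_).symm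
    rw [hq, hσ]

section Caratheodory

variable {W : Type*} [AddCommGroup W] [Module ℝ W] [FiniteDimensional ℝ W] (τ : W →ₗ[ℝ] ℝ)

lemma exists_relation_neg_entry_of_finrank_lt {ι : Type*} [Fintype ι] {w : ι → W}
    (hw : ∀ i, τ (w i) = 1) (hcard : finrank ℝ W < Fintype.card ι) (S : ι → ℝ) :
    ∃ c : ι → ℝ, ∑ i, c i • w i = 0 ∧ (∃ i, c i < 0) ∧ ∑ i, c i * S i ≤ 0 := by
  obtain ⟨g, hg, i₀, hgi₀⟩ := (Fintype.not_linearIndependent_iff (v := w)).mp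
    fun hli => hcard.not_ge hli.fintype_card_le_finrank
  have hgsum : ∑ i, g i = 0 := by
    simpa [map_sum, hw] using congrArg τ hg
  have hneg : ∀ c : ι → ℝ, ∑ i, c i = 0 → c i₀ ≠ 0 → ∃ i, c i < 0 := by
    intro c hc hci₀
    by_contra! hpos
    exact hci₀ ((sum_eq_zero_iff_of_nonneg fun i _ => hpos i).mp hc i₀ (mem_univ i₀))
  rcases le_or_gt (∑ i, g i * S i) 0 with hS | hS
  · exact ⟨g, hg, hneg g hgsum hgi₀, hS⟩
  · refine ⟨-g, by simp [neg_smul, hg], hneg (-g) (by simp [hgsum]) (by simpa using hgi₀), ?_⟩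
    simp only [Pi.neg_apply, neg_mul, sum_neg_distrib]
    linarith

lemma exists_reweight_eq_zero_of_finrank_lt {ι : Type*} [Fintype ι] {w : ι → W}
    (hw : ∀ i, τ (w i) = 1) (hcard : finrank ℝ W < Fintype.card ι) (S : ι → ℝ) {p : ι → ℝ}
    (hp : ∀ i, 0 ≤ p i) :
    ∃ q : ι → ℝ, (∀ i, 0 ≤ q i) ∧ (∃ i, q i = 0) ∧
      ∑ i, q i • w i = ∑ i, p i • w i ∧ ∑ i, q i * S i ≤ ∑ i, p i * S i := by
  obtain ⟨c, hcw, hneg, hcS⟩ := exists_relation_neg_entry_of_finrank_lt τ hw hcard S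
  obtain ⟨t, ht, hq, hzero⟩ := exists_nonneg_add_mul_eq_zero hp hneg
  refine ⟨fun i => p i + t * c i, hq, hzero, ?_, ?_⟩
  · simp only [add_smul, mul_smul, sum_add_distrib, ← smul_sum, hcw, smul_zero, add_zero]
  · calc ∑ i, (p i + t * c i) * S i = ∑ i, p i * S i + t * ∑ i, c i * S i := by
          rw [mul_sum, ← sum_add_distrib]
          exact sum_congr rfl fun i _ => by ring
      _ ≤ ∑ i, p i * S i := by linarith [mul_nonpos_of_nonneg_of_nonpos ht hcS]

theorem exists_reindex_weights_of_finrank_le {N : ℕ} (hN : finrank ℝ W ≤ N) :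
    ∀ {k : ℕ} (w : Fin k → W), 0 < k → (∀ i, τ (w i) = 1) →
      ∀ (S p : Fin k → ℝ), (∀ i, 0 ≤ p i) →
      ∃ (σ : Fin N → Fin k) (q : Fin N → ℝ), (∀ j, 0 ≤ q j) ∧
        ∑ j, q j • w (σ j) = ∑ i, p i • w i ∧ ∑ j, q j * S (σ j) ≤ ∑ i, p i * S i
  | k + 1, w, hk, hw, S, p, hp => by
    by_cases hkN : k + 1 ≤ N
    · obtain ⟨σ, q, hq, hqw, hqS⟩ := exists_pad_weights hk hkN w S p hp
      exact ⟨σ, q, hq, hqw, hqS.le⟩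
    obtain ⟨q, hq, ⟨i₀, hi₀⟩, hqw, hqS⟩ :=
      exists_reweight_eq_zero_of_finrank_lt τ hw (by rw [Fintype.card_fin]; omega) S hp
    have hW : 0 < finrank ℝ W := finrank_pos_iff_exists_ne_zero.mpr
      ⟨w 0, fun h => by simpa [h] using hw 0⟩
    obtain ⟨σ, r, hr, hrw, hrS⟩ := exists_reindex_weights_of_finrank_le hN
      (w ∘ i₀.succAbove) (by omega) (fun j => hw _) (S ∘ i₀.succAbove) (q ∘ i₀.succAbove)
      (fun j => hq _)
    refine ⟨i₀.succAbove ∘ σ, r, hr, ?_, ?_⟩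
    · rw [← hqw, Fin.sum_univ_succAbove _ i₀, hi₀, zero_smul, zero_add]
      exact hrw
    · calc ∑ j, r j * S (i₀.succAbove (σ j)) ≤ ∑ j, q (i₀.succAbove j) * S (i₀.succAbove j) :=
            hrS
        _ = ∑ i, q i * S i := by rw [Fin.sum_univ_succAbove _ i₀, hi₀, zero_mul, zero_add]
        _ ≤ ∑ i, p i * S i := hqS

end Caratheodory

namespace Matrix

variable {α : Type*}

/-- Real coordinates that are injective on Hermitian matrices: the entries at `(i, j)` and
`(j, i)` are conjugate, so their two values of `re + im` recover both `re` and `im`. -/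
def reAddIm : Matrix α α ℂ →ₗ[ℝ] (α × α → ℝ) where
  toFun A x := (A x.1 x.2).re + (A x.1 x.2).im
  map_add' A B := by ext; simp only [add_apply, Complex.add_re, Complex.add_im, Pi.add_apply]; ring
  map_smul' r A := by ext; simp [smul_apply, mul_add]

lemma IsHermitian.eq_of_reAddIm_eq {A B : Matrix α α ℂ} (hA : A.IsHermitian)
    (hB : B.IsHermitian) (h : reAddIm A = reAddIm B) : A = B := by
  ext i j
  have hij := congrFun h (i, j)
  have hji := congrFun h (j, i)
  simp only [reAddIm, LinearMap.coe_mk, AddHom.coe_mk] at hij hji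
  rw [← hA.apply j i, ← hB.apply j i] at hji
  simp only [Complex.star_def, Complex.conj_re, Complex.conj_im] at hji
  apply Complex.ext <;> linarith

variable [Fintype α]

def diagSum : (α × α → ℝ) →ₗ[ℝ] ℝ := ∑ i, LinearMap.proj (i, i)

lemma diagSum_reAddIm (A : Matrix α α ℂ) :
    diagSum (reAddIm A) = A.trace.re + A.trace.im := by
  simp [diagSum, reAddIm, trace, sum_add_distrib]

end Matrix

lemma trace_vecState {α : Type*} [Fintype α] (ψ : α → ℂ) :
    (vecState ψ).trace = star ψ ⬝ᵥ ψ := by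
  simp [Matrix.trace, vecState, dotProduct, mul_comm]

lemma isHermitian_sum_smul_vecState {ι α : Type*} [Fintype ι] (p : ι → ℝ) (ψ : ι → α → ℂ) :
    (∑ i, (p i : ℂ) • vecState (ψ i)).IsHermitian := by
  ext a b
  simp [Matrix.conjTranspose_apply, Matrix.sum_apply, vecState, mul_comm, mul_left_comm,
    mul_assoc]

theorem exists_reindex_ensemble_of_card_sq_le {α : Type*} [Fintype α] {N k : ℕ}
    (hN : Fintype.card α ^ 2 ≤ N) (hk : 0 < k) (ψ : Fin k → α → ℂ)
    (hψ : ∀ i, star (ψ i) ⬝ᵥ ψ i = 1) (f : (α → ℂ) → ℝ) (p : Fin k → ℝ)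
    (hp : ∀ i, 0 ≤ p i) :
    ∃ (σ : Fin N → Fin k) (q : Fin N → ℝ), (∀ j, 0 ≤ q j) ∧
      ∑ j, (q j : ℂ) • vecState (ψ (σ j)) = ∑ i, (p i : ℂ) • vecState (ψ i) ∧
      ∑ j, q j * f (ψ (σ j)) ≤ ∑ i, p i * f (ψ i) := by
  have hw : ∀ i, Matrix.diagSum (Matrix.reAddIm (vecState (ψ i))) = 1 := fun i => by
    simp [Matrix.diagSum_reAddIm, trace_vecState, hψ]
  obtain ⟨σ, q, hq, hqw, hqS⟩ := exists_reindex_weights_of_finrank_le Matrix.diagSum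
    (by simpa [sq] using hN) _ hk hw (f ∘ ψ) p hp
  refine ⟨σ, q, hq, ?_, hqS⟩
  apply (isHermitian_sum_smul_vecState _ _).eq_of_reAddIm_eq (isHermitian_sum_smul_vecState _ _)
  simpa [Complex.coe_smul, map_sum, map_smul] using hqw

/-- The infimum defining the entanglement of formation is attained
already over ensembles with (at most) `m²n²` members. -/
theorem eof_eq_inf_fixed_ensemble_size (m n : ℕ)
    (ρ : Matrix (Fin m × Fin n) (Fin m × Fin n) ℂ) (hρ : IsState ρ) :
    EoF ρ = sInf {x : ℝ | ∃ (p : Fin (m ^ 2 * n ^ 2) → ℝ)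
        (ψ : Fin (m ^ 2 * n ^ 2) → Fin m × Fin n → ℂ),
      (∀ i, 0 ≤ p i) ∧ (∀ i, star (ψ i) ⬝ᵥ ψ i = 1) ∧
      (∑ i, (p i : ℂ) • vecState (ψ i)) = ρ ∧
      x = ∑ i, p i * vnEntropy (ptrace2 (vecState (ψ i)))} := by
  refine csInf_eq_csInf_of_forall_exists_le ?_ ?_
  · rintro x ⟨k, p, ψ, hp, hψ, hpψ, rfl⟩
    have hk : 0 < k := Nat.pos_of_ne_zero fun hk => by
      subst hk
      simpa [← hpψ] using hρ.2
    obtain ⟨σ, q, hq, hqψ, hle⟩ := exists_reindex_ensemble_of_card_sq_le (N := m ^ 2 * n ^ 2)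
      (by simp [mul_pow]) hk ψ hψ (fun φ => vnEntropy (ptrace2 (vecState φ))) p hp
    exact ⟨_, ⟨q, ψ ∘ σ, hq, fun j => hψ _, hqψ.trans hpψ, rfl⟩, hle⟩
  · rintro y ⟨p, ψ, hp, hψ, hpψ, rfl⟩
    exact ⟨_, ⟨_, p, ψ, hp, hψ, hpψ, rfl⟩, le_rfl⟩
end

section
/- Let A_1,…,A_l be d'×d complex matrices with Σ_k A_k* A_k = I_d, and let Φ(X) = Σ_k A_k X A_k*. Then the constrained Holevo capacity ρ ↦ χ_Φ(ρ) is concave on states: for all states ρ₁, ρ₂ on ℂ^d and all t ∈ [0,1], χ_Φ(tρ₁ + (1−t)ρ₂) ≥ t χ_Φ(ρ₁) + (1−t) χ_Φ(ρ₂). -/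
open scoped Kronecker ComplexOrder Matrix

noncomputable section

/-- The channel determined by Kraus operators `A k`. -/
def krausMap {l d d' : ℕ} (A : Fin l → Matrix (Fin d') (Fin d) ℂ)
    (X : Matrix (Fin d) (Fin d) ℂ) : Matrix (Fin d') (Fin d') ℂ :=
  ∑ k, A k * X * (A k)ᴴ

/-- The constrained Holevo capacity `χ_Φ(ρ)`. -/
def constrainedHolevo {l d d' : ℕ} (A : Fin l → Matrix (Fin d') (Fin d) ℂ)
    (ρ : Matrix (Fin d) (Fin d) ℂ) : ℝ :=
  vnEntropy (krausMap A ρ) -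
    sInf {x : ℝ | ∃ (k : ℕ) (p : Fin k → ℝ) (ψ : Fin k → Fin d → ℂ),
      (∀ i, 0 ≤ p i) ∧ (∀ i, star (ψ i) ⬝ᵥ ψ i = 1) ∧
      (∑ i, (p i : ℂ) • vecState (ψ i)) = ρ ∧
      x = ∑ i, p i * vnEntropy (krausMap A (vecState (ψ i)))}

/-!
Write `χ_Φ(ρ) = S(Φ ρ) - F(ρ)`, where `F(ρ)` is the least average output entropy of a pure-state
ensemble of `ρ`. Since `Φ` is linear, the first term is concave as soon as `S` is. Concavity of `S`
comes from the fact that the spectrum of a state is mapped to its diagonal in any orthonormal basis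
by the doubly stochastic matrix `|Uᵢⱼ|²`, so that `S(ρ)` is at most the Shannon entropy of that
diagonal; in the eigenbasis of `tρ₁ + (1-t)ρ₂` the diagonals mix linearly and `-x log x` is concave.
The second term is convex because ensembles of `ρ₁` and `ρ₂`, weighted by `t` and `1-t` and
concatenated, form an ensemble of the mixture.
-/

open scoped Pointwise

theorem Real.sInf_le_smul_add_smul {s t u : Set ℝ} (hs : s.Nonempty) (hs' : BddBelow s)
    (ht : t.Nonempty) (ht' : BddBelow t) (hu : BddBelow u) {a b : ℝ} (ha : 0 ≤ a) (hb : 0 ≤ b)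
    (hsub : a • s + b • t ⊆ u) :
    sInf u ≤ a * sInf s + b * sInf t :=
  calc sInf u ≤ sInf (a • s + b • t) := csInf_le_csInf hu (hs.smul_set.add ht.smul_set) hsub
    _ = sInf (a • s) + sInf (b • t) :=
        csInf_add hs.smul_set (hs'.smul_of_nonneg ha) ht.smul_set (ht'.smul_of_nonneg hb)
    _ = a * sInf s + b * sInf t := by
        rw [Real.sInf_smul_of_nonneg ha, Real.sInf_smul_of_nonneg hb, smul_eq_mul, smul_eq_mul]

section Entropy

open Matrix

variable {n : Type*} [Fintype n] [DecidableEq n]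

theorem Real.sum_negMulLog_le_sum_negMulLog_mulVec {B : Matrix n n ℝ}
    (hB : B ∈ doublyStochastic ℝ n) {μ : n → ℝ} (hμ : ∀ i, 0 ≤ μ i) :
    ∑ i, Real.negMulLog (μ i) ≤ ∑ j, Real.negMulLog ((B *ᵥ μ) j) := by
  obtain ⟨hB₀, hrow, hcol⟩ := mem_doublyStochastic_iff_sum.1 hB
  calc ∑ i, Real.negMulLog (μ i) = ∑ j, ∑ i, B j i * Real.negMulLog (μ i) := by
        rw [Finset.sum_comm]; simp [← Finset.sum_mul, hcol]
    _ ≤ ∑ j, Real.negMulLog ((B *ᵥ μ) j) := Finset.sum_le_sum fun j _ => by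
        simpa [mulVec, dotProduct] using Real.concaveOn_negMulLog.le_map_sum
          (fun i _ => hB₀ j i) (hrow j) (fun i _ => Set.mem_Ici.2 (hμ i))

theorem Matrix.mul_diagonal_mul_star_apply (U : Matrix n n ℂ) (d : n → ℂ) (j m : n) :
    (U * diagonal d * star U) j m = ∑ i, d i * (U j i * star (U m i)) := by
  rw [mul_apply]
  simp only [mul_diagonal, star_apply]
  exact Finset.sum_congr rfl fun i _ => by ring

theorem Matrix.normSq_apply_mem_doublyStochastic {U : Matrix n n ℂ}
    (hU : U ∈ unitaryGroup n ℂ) :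
    (of fun i j => Complex.normSq (U i j)) ∈ doublyStochastic ℝ n := by
  have hrow (i : n) : ∑ j, Complex.normSq (U i j) = 1 := by
    have := congrFun (congrFun (mem_unitaryGroup_iff.mp hU) i) i
    simp only [mul_apply, star_apply, Complex.star_def, Complex.mul_conj, one_apply_eq] at this
    exact_mod_cast this
  have hcol (j : n) : ∑ i, Complex.normSq (U i j) = 1 := by
    have := congrFun (congrFun (mem_unitaryGroup_iff'.mp hU) j) j
    simp only [mul_apply, star_apply, Complex.star_def, mul_comm (starRingEnd ℂ _),
      Complex.mul_conj, one_apply_eq] at this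
    exact_mod_cast this
  exact mem_doublyStochastic_iff_sum.2
    ⟨fun i j => Complex.normSq_nonneg _, hrow, hcol⟩

theorem Matrix.re_mul_diagonal_mul_star_apply_self (U : Matrix n n ℂ) (μ : n → ℝ) (j : n) :
    ((U * diagonal (RCLike.ofReal ∘ μ) * star U : Matrix n n ℂ) j j).re =
      ((of fun i j => Complex.normSq (U i j)) *ᵥ μ) j := by
  rw [mul_diagonal_mul_star_apply]
  simp only [Complex.star_def, Complex.mul_conj, Complex.re_sum,
    mulVec, dotProduct, of_apply]
  exact Finset.sum_congr rfl fun i _ => by simp [mul_comm]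

theorem vnEntropy_eq_sum_negMulLog_eigenvalues {A : Matrix n n ℂ} (hA : A.IsHermitian) :
    vnEntropy A = ∑ i, Real.negMulLog (hA.eigenvalues i) :=
  dif_pos hA

theorem vnEntropy_le_sum_negMulLog_re_diag {ρ : Matrix n n ℂ} (hρ : ρ.PosSemidef)
    {U : Matrix n n ℂ} (hU : U ∈ unitaryGroup n ℂ) :
    vnEntropy ρ ≤ ∑ j, Real.negMulLog ((star U * ρ * U) j j).re := by
  set W : Matrix n n ℂ := (hρ.1.eigenvectorUnitary : Matrix n n ℂ)
  set μ := hρ.1.eigenvalues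
  have hρ_eq : ρ = W * diagonal (RCLike.ofReal ∘ μ) * star W := hρ.1.spectral_theorem
  have hV : star U * W ∈ unitaryGroup n ℂ :=
    mul_mem (Unitary.star_mem hU) hρ.1.eigenvectorUnitary.2
  have hconj :
      star U * ρ * U = (star U * W) * diagonal (RCLike.ofReal ∘ μ) * star (star U * W) := by
    rw [hρ_eq, star_mul, star_star]; noncomm_ring
  rw [vnEntropy_eq_sum_negMulLog_eigenvalues hρ.1, hconj]
  simp only [re_mul_diagonal_mul_star_apply_self]
  exact Real.sum_negMulLog_le_sum_negMulLog_mulVec (normSq_apply_mem_doublyStochastic hV)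
    hρ.eigenvalues_nonneg

theorem vnEntropy_concave {ρ₁ ρ₂ : Matrix n n ℂ} (h₁ : ρ₁.PosSemidef) (h₂ : ρ₂.PosSemidef)
    {a b : ℝ} (ha : 0 ≤ a) (hb : 0 ≤ b) (hab : a + b = 1) :
    a * vnEntropy ρ₁ + b * vnEntropy ρ₂ ≤ vnEntropy ((a : ℂ) • ρ₁ + (b : ℂ) • ρ₂) := by
  set σ := (a : ℂ) • ρ₁ + (b : ℂ) • ρ₂
  have hσ : σ.IsHermitian :=
    ((h₁.smul (Complex.zero_le_real.2 ha)).add (h₂.smul (Complex.zero_le_real.2 hb))).1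
  set U : Matrix n n ℂ := (hσ.eigenvectorUnitary : Matrix n n ℂ)
  set c : Matrix n n ℂ → n → ℝ := fun ρ j => ((star U * ρ * U) j j).re
  have hc_nonneg {ρ : Matrix n n ℂ} (hρ : ρ.PosSemidef) (j : n) : 0 ≤ c ρ j := by
    have := (hρ.conjTranspose_mul_mul_same U).diag_nonneg (i := j)
    exact (Complex.nonneg_iff.1 this).1
  have hσ_diag (j : n) : hσ.eigenvalues j = a * c ρ₁ j + b * c ρ₂ j := by
    have hdiag := hσ.conjStarAlgAut_star_eigenvectorUnitary
    rw [Unitary.conjStarAlgAut_star_apply] at hdiag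
    have := congrArg Complex.re (congrFun (congrFun hdiag j) j)
    simp only [σ, c, mul_add, add_mul] at this ⊢
    simpa using this.symm
  calc a * vnEntropy ρ₁ + b * vnEntropy ρ₂
      ≤ a * ∑ j, Real.negMulLog (c ρ₁ j) + b * ∑ j, Real.negMulLog (c ρ₂ j) := by
        gcongr
        exacts [vnEntropy_le_sum_negMulLog_re_diag h₁ hσ.eigenvectorUnitary.2,
          vnEntropy_le_sum_negMulLog_re_diag h₂ hσ.eigenvectorUnitary.2]
    _ = ∑ j, (a * Real.negMulLog (c ρ₁ j) + b * Real.negMulLog (c ρ₂ j)) := by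
        rw [Finset.sum_add_distrib, Finset.mul_sum, Finset.mul_sum]
    _ ≤ ∑ j, Real.negMulLog (hσ.eigenvalues j) := Finset.sum_le_sum fun j _ => by
        rw [hσ_diag]
        exact Real.concaveOn_negMulLog.2 (hc_nonneg h₁ j) (hc_nonneg h₂ j) ha hb hab
    _ = vnEntropy σ := (vnEntropy_eq_sum_negMulLog_eigenvalues hσ).symm

end Entropy

theorem isState_vecState {α : Type*} [Fintype α] {ψ : α → ℂ} (hψ : star ψ ⬝ᵥ ψ = 1) :
    IsState (vecState ψ) := by
  refine ⟨Matrix.posSemidef_vecMulVec_self_star ψ, ?_⟩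
  rw [← hψ]
  simp [Matrix.trace, vecState, dotProduct, mul_comm]

theorem vnEntropy_nonneg {α : Type*} [Fintype α] [DecidableEq α] {ρ : Matrix α α ℂ}
    (hρ : IsState ρ) : 0 ≤ vnEntropy ρ := by
  have hsum : ∑ i, hρ.1.1.eigenvalues i = 1 := by
    have htrace := hρ.2
    rw [hρ.1.1.trace_eq_sum_eigenvalues] at htrace
    simpa using congrArg Complex.re htrace
  rw [vnEntropy_eq_sum_negMulLog_eigenvalues hρ.1.1]
  refine Finset.sum_nonneg fun i _ => Real.negMulLog_nonneg (hρ.1.eigenvalues_nonneg i) ?_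
  exact hsum ▸ Finset.single_le_sum (fun j _ => hρ.1.eigenvalues_nonneg j) (Finset.mem_univ i)

section KrausMap

variable {l d d' : ℕ} (A : Fin l → Matrix (Fin d') (Fin d) ℂ)

theorem krausMap_smul_add_smul (a b : ℂ) (X Y : Matrix (Fin d) (Fin d) ℂ) :
    krausMap A (a • X + b • Y) = a • krausMap A X + b • krausMap A Y := by
  simp only [krausMap, Matrix.mul_add, Matrix.add_mul, Matrix.mul_smul, Matrix.smul_mul,
    Finset.sum_add_distrib, Finset.smul_sum]

theorem Matrix.PosSemidef.krausMap {ρ : Matrix (Fin d) (Fin d) ℂ} (hρ : ρ.PosSemidef) :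
    (krausMap A ρ).PosSemidef :=
  Matrix.posSemidef_sum _ fun k _ => hρ.mul_mul_conjTranspose_same (A k)

theorem IsState.krausMap (hA : ∑ k, (A k)ᴴ * A k = 1) {ρ : Matrix (Fin d) (Fin d) ℂ}
    (hρ : IsState ρ) : IsState (krausMap A ρ) := by
  refine ⟨hρ.1.krausMap A, ?_⟩
  rw [_root_.krausMap, Matrix.trace_sum]
  simp_rw [Matrix.trace_mul_cycle _ ρ, ← Matrix.trace_sum, ← Finset.sum_mul, hA, Matrix.one_mul]
  exact hρ.2

end KrausMap

section Ensembles

variable {l d d' : ℕ} (A : Fin l → Matrix (Fin d') (Fin d) ℂ)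

def ensembleOutputEntropies (ρ : Matrix (Fin d) (Fin d) ℂ) : Set ℝ :=
  {x : ℝ | ∃ (k : ℕ) (p : Fin k → ℝ) (ψ : Fin k → Fin d → ℂ),
    (∀ i, 0 ≤ p i) ∧ (∀ i, star (ψ i) ⬝ᵥ ψ i = 1) ∧
    (∑ i, (p i : ℂ) • vecState (ψ i)) = ρ ∧
    x = ∑ i, p i * vnEntropy (krausMap A (vecState (ψ i)))}

theorem constrainedHolevo_eq (ρ : Matrix (Fin d) (Fin d) ℂ) :
    constrainedHolevo A ρ = vnEntropy (krausMap A ρ) - sInf (ensembleOutputEntropies A ρ) :=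
  rfl

theorem bddBelow_ensembleOutputEntropies (hA : ∑ k, (A k)ᴴ * A k = 1)
    (ρ : Matrix (Fin d) (Fin d) ℂ) : BddBelow (ensembleOutputEntropies A ρ) := by
  refine ⟨0, ?_⟩
  rintro x ⟨k, p, ψ, hp, hψ, -, rfl⟩
  exact Finset.sum_nonneg fun i _ =>
    mul_nonneg (hp i) (vnEntropy_nonneg ((isState_vecState (hψ i)).krausMap A hA))

/-- The spectral decomposition of `ρ` is an ensemble for `ρ`. -/
theorem ensembleOutputEntropies_nonempty {ρ : Matrix (Fin d) (Fin d) ℂ} (hρ : ρ.PosSemidef) :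
    (ensembleOutputEntropies A ρ).Nonempty := by
  set W : Matrix (Fin d) (Fin d) ℂ := (hρ.1.eigenvectorUnitary : Matrix (Fin d) (Fin d) ℂ)
  set μ := hρ.1.eigenvalues
  have hρ_eq : ρ = W * Matrix.diagonal (RCLike.ofReal ∘ μ) * star W := hρ.1.spectral_theorem
  refine ⟨_, d, μ, fun i j => W j i, hρ.eigenvalues_nonneg, fun i => ?_, ?_, rfl⟩
  · have hW : W ∈ Matrix.unitaryGroup (Fin d) ℂ := hρ.1.eigenvectorUnitary.2
    have := congrFun (congrFun (Matrix.mem_unitaryGroup_iff'.mp hW) i) i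
    simpa only [Matrix.mul_apply, Matrix.star_apply, Matrix.one_apply_eq, dotProduct,
      Pi.star_apply] using this
  · ext j m
    rw [hρ_eq, Matrix.mul_diagonal_mul_star_apply]
    simp [Matrix.sum_apply, vecState]

theorem smul_add_smul_subset_ensembleOutputEntropies {ρ₁ ρ₂ : Matrix (Fin d) (Fin d) ℂ}
    {a b : ℝ} (ha : 0 ≤ a) (hb : 0 ≤ b) :
    a • ensembleOutputEntropies A ρ₁ + b • ensembleOutputEntropies A ρ₂ ⊆
      ensembleOutputEntropies A ((a : ℂ) • ρ₁ + (b : ℂ) • ρ₂) := by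
  rintro _ ⟨_, ⟨_, ⟨k₁, p, ψ, hp, hψ, rfl, rfl⟩, rfl⟩, _,
    ⟨_, ⟨k₂, q, φ, hq, hφ, rfl, rfl⟩, rfl⟩, rfl⟩
  refine ⟨k₁ + k₂, Fin.append (a • p) (b • q), Fin.append ψ φ, ?_, ?_, ?_, ?_⟩
  · exact Fin.addCases (fun i => by simpa using mul_nonneg ha (hp i))
      (fun i => by simpa using mul_nonneg hb (hq i))
  · exact Fin.addCases (fun i => by simpa using hψ i) (fun i => by simpa using hφ i)
  · simp [Fin.sum_univ_add, Finset.smul_sum, smul_smul]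
  · simp [Fin.sum_univ_add, Finset.mul_sum, mul_assoc]

end Ensembles

/-- The constrained Holevo capacity `ρ ↦ χ_Φ(ρ)` is concave on
states. -/
theorem constrainedHolevo_concave (l d d' : ℕ)
    (A : Fin l → Matrix (Fin d') (Fin d) ℂ) (hA : ∑ k, (A k)ᴴ * A k = 1)
    (ρ₁ ρ₂ : Matrix (Fin d) (Fin d) ℂ) (h₁ : IsState ρ₁) (h₂ : IsState ρ₂)
    (t : ℝ) (ht₀ : 0 ≤ t) (ht₁ : t ≤ 1) :
    t * constrainedHolevo A ρ₁ + (1 - t) * constrainedHolevo A ρ₂ ≤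
      constrainedHolevo A ((t : ℂ) • ρ₁ + ((1 - t : ℝ) : ℂ) • ρ₂) := by
  have ht₁' : 0 ≤ 1 - t := sub_nonneg.2 ht₁
  have hOutput := vnEntropy_concave (h₁.1.krausMap A) (h₂.1.krausMap A) ht₀ ht₁'
    (add_sub_cancel t 1)
  have hEnsemble := Real.sInf_le_smul_add_smul
    (ensembleOutputEntropies_nonempty A h₁.1) (bddBelow_ensembleOutputEntropies A hA ρ₁)
    (ensembleOutputEntropies_nonempty A h₂.1) (bddBelow_ensembleOutputEntropies A hA ρ₂)
    (bddBelow_ensembleOutputEntropies A hA _) ht₀ ht₁'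
    (smul_add_smul_subset_ensembleOutputEntropies A ht₀ ht₁')
  rw [← krausMap_smul_add_smul] at hOutput
  simp only [constrainedHolevo_eq]
  linarith
end
end
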